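/- arXiv:1803.02610 — 2 statements merged into one kernel-verified Lean document; each statement's English description precedes it below -/
import Mathlib

section
/- Let V be a finite-dimensional real inner product space with an almost contact metric structure (φ, ξ, η, g), and let W ⊆ V be a subspace with ξ ∈ W that is anti-invariant, i.e. φ(W) ⊆ W⊥. Define the semisymmetric-metric-connection curvature R̃(X,Y)Z = (f₁-1)(g(Y,Z)X - g(X,Z)Y) + f₂(g(X,φZ)φY - g(Y,φZ)φX + 2g(X,φY)φZ) + (f₃-1)(η(X)η(Z)Y - η(Y)η(Z)X + g(X,Z)η(Y)ξ - g(Y,Z)η(X)ξ) + (f₁-f₃)(g(X,φZ)Y - g(Y,φZ)X + g(Y,Z)φX - g(X,Z)φY). Then for X, Y, Z ∈ W, the orthogonal projection of R̃(X,Y)Z onto W equals (f₁-1)(g(Y,Z)X - g(X,Z)Y) + (f₃-1)(η(X)η(Z)Y - η(Y)η(Z)X + g(X,Z)η(Y)ξ - g(Y,Z)η(X)ξ), and the projection onto W⊥ equals (f₁-f₃)(g(Y,Z)φX - g(X,Z)φY). -/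
open RealInnerProductSpace

theorem stmt_3 {V : Type*} [NormedAddCommGroup V] [InnerProductSpace ℝ V]
    [FiniteDimensional ℝ V] (φ : V →ₗ[ℝ] V) (ξ : V) (η : V →ₗ[ℝ] ℝ)
    (hφ2 : ∀ X : V, φ (φ X) = -X + η X • ξ)
    (hφξ : φ ξ = 0) (hηξ : η ξ = 1)
    (hgξ : ∀ X : V, ⟪X, ξ⟫ = η X)
    (hmet : ∀ X Y : V, ⟪φ X, φ Y⟫ = ⟪X, Y⟫ - η X * η Y)
    (f₁ f₂ f₃ : ℝ) (W : Submodule ℝ V) (hξW : ξ ∈ W)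
    (hanti : ∀ x ∈ W, φ x ∈ Wᗮ) :
    ∀ X ∈ W, ∀ Y ∈ W, ∀ Z ∈ W,
      ((f₁ - 1) • (⟪Y, Z⟫ • X - ⟪X, Z⟫ • Y) + (f₃ - 1) • ((η X * η Z) • Y - (η Y * η Z) • X + (⟪X, Z⟫ * η Y) • ξ - (⟪Y, Z⟫ * η X) • ξ)) ∈ W ∧
      ((f₁ - f₃) • (⟪Y, Z⟫ • φ X - ⟪X, Z⟫ • φ Y)) ∈ Wᗮ ∧
      (f₁ - 1) • (⟪Y, Z⟫ • X - ⟪X, Z⟫ • Y) + f₂ • (⟪X, φ Z⟫ • φ Y - ⟪Y, φ Z⟫ • φ X + (2 * ⟪X, φ Y⟫) • φ Z) + (f₃ - 1) • ((η X * η Z) • Y - (η Y * η Z) • X + (⟪X, Z⟫ * η Y) • ξ - (⟪Y, Z⟫ * η X) • ξ) + (f₁ - f₃) • (⟪X, φ Z⟫ • Y - ⟪Y, φ Z⟫ • X + ⟪Y, Z⟫ • φ X - ⟪X, Z⟫ • φ Y) =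
        ((f₁ - 1) • (⟪Y, Z⟫ • X - ⟪X, Z⟫ • Y) + (f₃ - 1) • ((η X * η Z) • Y - (η Y * η Z) • X + (⟪X, Z⟫ * η Y) • ξ - (⟪Y, Z⟫ * η X) • ξ)) + ((f₁ - f₃) • (⟪Y, Z⟫ • φ X - ⟪X, Z⟫ • φ Y)) := by
  intro X hX Y hY Z hZ
  have key : ∀ a ∈ W, ∀ b ∈ W, ⟪a, φ b⟫ = (0:ℝ) := fun a ha b hb =>
    (Submodule.mem_orthogonal W (φ b)).1 (hanti b hb) a ha
  refine ⟨?_, ?_, ?_⟩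
  · exact Submodule.add_mem W
      (Submodule.smul_mem W _ (Submodule.sub_mem W (Submodule.smul_mem W _ hX) (Submodule.smul_mem W _ hY)))
      (Submodule.smul_mem W _ (Submodule.sub_mem W
        (Submodule.add_mem W (Submodule.sub_mem W (Submodule.smul_mem W _ hY) (Submodule.smul_mem W _ hX))
          (Submodule.smul_mem W _ hξW)) (Submodule.smul_mem W _ hξW)))
  · exact Submodule.smul_mem _ _ (Submodule.sub_mem _ (Submodule.smul_mem _ _ (hanti X hX)) (Submodule.smul_mem _ _ (hanti Y hY)))
  · rw [key X hX Z hZ, key Y hY Z hZ, key X hX Y hY]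
    simp only [zero_smul, mul_zero, smul_zero, sub_zero, zero_sub, add_zero, zero_add, neg_zero, smul_neg, smul_sub, smul_add]
end

section
/- Let V be a finite-dimensional real inner product space with an almost contact metric structure (φ, ξ, η, g), and W ⊆ V a subspace containing ξ that is invariant (φ(W) ⊆ W). For U, V' ∈ W⊥ and X ∈ W, the Schouten-van Kampen curvature R̂(U,V')X, where R̂(X,Y)Z = f₁(g(Y,Z)X - g(X,Z)Y) + f₂(g(X,φZ)φY - g(Y,φZ)φX + 2g(X,φY)φZ) + (f₃ + (f₁-f₃)²)(η(X)η(Z)Y - η(Y)η(Z)X + g(X,Z)η(Y)ξ - g(Y,Z)η(X)ξ) + (f₁-f₃)²(g(X,φZ)φY - g(Y,φZ)φX), equals 2 f₂ g(U, φV') φX, and in particular lies in W. -/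
open RealInnerProductSpace

theorem stmt_10 {V : Type*} [NormedAddCommGroup V] [InnerProductSpace ℝ V]
    [FiniteDimensional ℝ V] (φ : V →ₗ[ℝ] V) (ξ : V) (η : V →ₗ[ℝ] ℝ)
    (hφ2 : ∀ X : V, φ (φ X) = -X + η X • ξ)
    (hφξ : φ ξ = 0) (hηξ : η ξ = 1)
    (hgξ : ∀ X : V, ⟪X, ξ⟫ = η X)
    (hmet : ∀ X Y : V, ⟪φ X, φ Y⟫ = ⟪X, Y⟫ - η X * η Y)
    (f₁ f₂ f₃ : ℝ) (W : Submodule ℝ V) (hξW : ξ ∈ W)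
    (hinv : ∀ x ∈ W, φ x ∈ W) :
    ∀ U ∈ Wᗮ, ∀ V' ∈ Wᗮ, ∀ X ∈ W,
      f₁ • (⟪V', X⟫ • U - ⟪U, X⟫ • V') + f₂ • (⟪U, φ X⟫ • φ V' - ⟪V', φ X⟫ • φ U + (2 * ⟪U, φ V'⟫) • φ X) + (f₃ + (f₁ - f₃)^2) • ((η U * η X) • V' - (η V' * η X) • U + (⟪U, X⟫ * η V') • ξ - (⟪V', X⟫ * η U) • ξ) + (f₁ - f₃)^2 • (⟪U, φ X⟫ • φ V' - ⟪V', φ X⟫ • φ U) =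
        (2 * f₂ * ⟪U, φ V'⟫) • φ X ∧
      f₁ • (⟪V', X⟫ • U - ⟪U, X⟫ • V') + f₂ • (⟪U, φ X⟫ • φ V' - ⟪V', φ X⟫ • φ U + (2 * ⟪U, φ V'⟫) • φ X) + (f₃ + (f₁ - f₃)^2) • ((η U * η X) • V' - (η V' * η X) • U + (⟪U, X⟫ * η V') • ξ - (⟪V', X⟫ * η U) • ξ) + (f₁ - f₃)^2 • (⟪U, φ X⟫ • φ V' - ⟪V', φ X⟫ • φ U) ∈ W := by
  intro U hU V' hV' X hX
  have hUX : ⟪U, X⟫ = 0 := real_inner_comm U X ▸ hU X hX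
  have hVX : ⟪V', X⟫ = 0 := real_inner_comm V' X ▸ hV' X hX
  have hUφX : ⟪U, φ X⟫ = 0 := real_inner_comm U (φ X) ▸ hU (φ X) (hinv X hX)
  have hVφX : ⟪V', φ X⟫ = 0 := real_inner_comm V' (φ X) ▸ hV' (φ X) (hinv X hX)
  have hηU : η U = 0 := by rw [← hgξ]; exact real_inner_comm U ξ ▸ hU ξ hξW
  have hηV : η V' = 0 := by rw [← hgξ]; exact real_inner_comm V' ξ ▸ hV' ξ hξW
  have heq : f₁ • (⟪V', X⟫ • U - ⟪U, X⟫ • V') + f₂ • (⟪U, φ X⟫ • φ V' - ⟪V', φ X⟫ • φ U + (2 * ⟪U, φ V'⟫) • φ X) + (f₃ + (f₁ - f₃)^2) • ((η U * η X) • V' - (η V' * η X) • U + (⟪U, X⟫ * η V') • ξ - (⟪V', X⟫ * η U) • ξ) + (f₁ - f₃)^2 • (⟪U, φ X⟫ • φ V' - ⟪V', φ X⟫ • φ U) = (2 * f₂ * ⟪U, φ V'⟫) • φ X := by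
    rw [hUX, hVX, hUφX, hVφX, hηU, hηV]
    simp [smul_smul]; ring_nf
  refine ⟨heq, ?_⟩
  rw [heq]
  exact Submodule.smul_mem _ _ (hinv X hX)
end
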